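/- arXiv:1809.10035 — 2 statements merged into one kernel-verified Lean document; each statement's English description precedes it below -/
import Mathlib

section
/- Let g : ℝ^n → ℝ be μ-strongly convex (μ > 0) with subgradients bounded by C_g on a nonempty closed convex set X, f : ℝ^n → ℝ convex, and for η > 0 let x*_η be the unique minimizer of f + η g over X. Then for any 0 < η' ≤ η, ‖x*_{η'} - x*_η‖ ≤ (C_g/μ)·|η/η' - 1|. -/
/-!
Both `f + η • g` and `f + η' • g` are strongly convex, so each grows quadratically away from its
minimiser over `X`. Adding the two growth inequalities at `xη` and `xη'` cancels `f` and leaves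
`(η + η') μ / 2 ‖xη' - xη‖² ≤ (η - η') (g xη' - g xη)`, and a subgradient of `g` at `xη'`, which
exists because `g` is convex and finite everywhere, bounds `g xη' - g xη` by `Cg ‖xη' - xη‖`.
-/

open RealInnerProductSpace

/-- `s` is a subgradient of `f` at `x`. -/
def SubgradientAt {n : ℕ} (f : EuclideanSpace ℝ (Fin n) → ℝ)
    (x s : EuclideanSpace ℝ (Fin n)) : Prop :=
  ∀ y, f x + ⟪s, y - x⟫ ≤ f y

open Set Filter Topology

section NormedSpace

variable {E : Type*} [NormedAddCommGroup E] [NormedSpace ℝ E] {s t : Set E} {m : ℝ} {f g : E → ℝ}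

lemma StrongConvexOn.subset (hf : StrongConvexOn t m f) (hst : s ⊆ t) (hs : Convex ℝ s) :
    StrongConvexOn s m f :=
  ⟨hs, fun _ hx _ hy => hf.2 (hst hx) (hst hy)⟩

lemma StrongConvexOn.const_smul {c : ℝ} (hf : StrongConvexOn s m f) (hc : 0 ≤ c) :
    StrongConvexOn s (c * m) (c • f) := by
  refine ⟨hf.1, fun x hx y hy a b ha hb hab => ?_⟩
  have h := mul_le_mul_of_nonneg_left (hf.2 hx hy ha hb hab) hc
  simp only [Pi.smul_apply, smul_eq_mul] at h ⊢
  linarith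

lemma ConvexOn.add_strongConvexOn (hf : ConvexOn ℝ s f) (hg : StrongConvexOn s m g) :
    StrongConvexOn s m (f + g) := by
  have h := hf.uniformConvexOn_zero.add hg
  rwa [zero_add] at h

lemma StrongConvexOn.add_sq_le_of_isMinOn {x y : E} (hf : StrongConvexOn s m f)
    (hmin : IsMinOn f s x) (hx : x ∈ s) (hy : y ∈ s) :
    f x + m / 2 * ‖y - x‖ ^ 2 ≤ f y := by
  set K := m / 2 * ‖y - x‖ ^ 2
  have hstep : ∀ τ ∈ Ioo (0 : ℝ) 1, f x + (1 - τ) * K ≤ f y := by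
    rintro τ ⟨hτ₀, hτ₁⟩
    have hmid := hmin (hf.1 hy hx hτ₀.le (sub_nonneg.2 hτ₁.le) (add_sub_cancel τ 1))
    have hconv : f (τ • y + (1 - τ) • x) ≤ τ * f y + (1 - τ) * f x - τ * (1 - τ) * K :=
      hf.2 hy hx hτ₀.le (sub_nonneg.2 hτ₁.le) (add_sub_cancel τ 1)
    refine le_of_mul_le_mul_left ?_ hτ₀
    linarith [show f x ≤ f (τ • y + (1 - τ) • x) from hmid]
  have hlim : Tendsto (fun τ : ℝ => f x + (1 - τ) * K) (𝓝[>] 0) (𝓝 (f x + K)) :=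
    tendsto_nhdsWithin_of_tendsto_nhds <| by
      simpa using (Continuous.tendsto (f := fun τ : ℝ => f x + (1 - τ) * K) (by fun_prop) 0)
  exact le_of_tendsto hlim (eventually_of_mem (Ioo_mem_nhdsGT one_pos) hstep)

lemma ConvexOn.sq_norm_sub_le_of_isMinOn_add_mul {μ η η' : ℝ} {x x' : E}
    (hf : ConvexOn ℝ s f) (hg : StrongConvexOn s μ g) (hη : 0 ≤ η) (hη' : 0 ≤ η')
    (hx : x ∈ s) (hmin : IsMinOn (fun y => f y + η * g y) s x)
    (hx' : x' ∈ s) (hmin' : IsMinOn (fun y => f y + η' * g y) s x') :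
    (η + η') * μ / 2 * ‖x' - x‖ ^ 2 ≤ (η - η') * (g x' - g x) := by
  have hobj : ∀ t, 0 ≤ t → StrongConvexOn s (t * μ) (fun y => f y + t * g y) := fun t ht =>
    hf.add_strongConvexOn (hg.const_smul ht)
  have hgrowth := (hobj η hη).add_sq_le_of_isMinOn hmin hx hx'
  have hgrowth' := (hobj η' hη').add_sq_le_of_isMinOn hmin' hx' hx
  rw [norm_sub_rev] at hgrowth'
  linarith

lemma ConvexOn.exists_continuousLinearMap_add_le (hf : ConvexOn ℝ univ f) (hc : Continuous f)
    (x : E) : ∃ L : E →L[ℝ] ℝ, ∀ y, f x + L (y - x) ≤ f y := by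
  have hopen : IsOpen {p : E × ℝ | p.1 ∈ univ ∧ f p.1 < p.2} := by
    simpa using isOpen_lt (hc.comp continuous_fst) continuous_snd
  obtain ⟨ℓ, hℓ⟩ := geometric_hahn_banach_open_point hf.convex_strict_epigraph hopen
    (x := (x, f x)) (by simp)
  set L := ℓ.comp (ContinuousLinearMap.inl ℝ E ℝ)
  set c := ℓ (0, 1)
  have hℓ_apply : ∀ y t, ℓ (y, t) = L y + t * c := by
    intro y t
    rw [show ((y, t) : E × ℝ) = (y, 0) + t • (0, 1) by simp, map_add, map_smul, smul_eq_mul]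
    rfl
  have hc : c < 0 := by
    have := hℓ (x, f x + 1) (by simp)
    rw [hℓ_apply, hℓ_apply] at this
    linarith
  have hsupp : ∀ y, L y + f y * c ≤ L x + f x * c := by
    intro y
    refine le_of_forall_pos_lt_add fun δ hδ => ?_
    have := hℓ (y, f y + δ / -c) (by simpa using div_pos hδ (neg_pos.2 hc))
    rw [hℓ_apply, hℓ_apply, add_mul, div_neg, neg_mul, div_mul_cancel₀ _ hc.ne] at this
    linarith
  refine ⟨(-c)⁻¹ • L, fun y => ?_⟩
  have hLy : (-c)⁻¹ * (L y - L x) ≤ f y - f x := by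
    rw [inv_mul_le_iff₀ (neg_pos.2 hc)]
    linarith [hsupp y]
  simp only [FunLike.coe_smul, Pi.smul_apply, map_sub, smul_eq_mul]
  linarith

end NormedSpace

lemma ConvexOn.exists_subgradient {E : Type*} [NormedAddCommGroup E] [InnerProductSpace ℝ E]
    [CompleteSpace E] {f : E → ℝ} (hf : ConvexOn ℝ univ f) (hc : Continuous f) (x : E) :
    ∃ s, ∀ y, f x + ⟪s, y - x⟫ ≤ f y := by
  obtain ⟨L, hL⟩ := hf.exists_continuousLinearMap_add_le hc x
  exact ⟨(InnerProductSpace.toDual ℝ E).symm L, by simpa using hL⟩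

lemma sub_le_norm_mul_of_forall_add_inner_le {E : Type*} [NormedAddCommGroup E]
    [InnerProductSpace ℝ E] {f : E → ℝ} {x s : E} (hs : ∀ y, f x + ⟪s, y - x⟫ ≤ f y) (y : E) :
    f x - f y ≤ ‖s‖ * ‖x - y‖ := by
  have hinner := (neg_le_abs _).trans (abs_real_inner_le_norm s (y - x))
  rw [norm_sub_rev] at hinner
  linarith [hs y]

theorem regularization_path_bound_general (n : ℕ)
    (X : Set (EuclideanSpace ℝ (Fin n)))
    (hXcv : Convex ℝ X)
    (f g : EuclideanSpace ℝ (Fin n) → ℝ)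
    (hf : ConvexOn ℝ Set.univ f)
    (μ : ℝ) (hμ : 0 < μ)
    (hg : StrongConvexOn Set.univ μ g)
    (Cg : ℝ) (hCg : ∀ x ∈ X, ∀ s, SubgradientAt g x s → ‖s‖ ≤ Cg)
    (η η' : ℝ) (hη' : 0 < η') (hη'η : η' ≤ η)
    (xη xη' : EuclideanSpace ℝ (Fin n))
    (hxη : xη ∈ X) (hxηmin : IsMinOn (fun y => f y + η * g y) X xη)
    (hxη' : xη' ∈ X) (hxη'min : IsMinOn (fun y => f y + η' * g y) X xη') :
    ‖xη' - xη‖ ≤ (Cg / μ) * |η / η' - 1| := by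
  have hsq := (hf.subset (subset_univ X) hXcv).sq_norm_sub_le_of_isMinOn_add_mul
    (hg.subset (subset_univ X) hXcv) (hη'.le.trans hη'η) hη'.le hxη hxηmin hxη' hxη'min
  have hgc : ConvexOn ℝ univ g := hg.convexOn fun r => by positivity
  obtain ⟨s, hs⟩ := hgc.exists_subgradient
    (continuousOn_univ.1 (hgc.continuousOn isOpen_univ)) xη'
  have hsCg : ‖s‖ ≤ Cg := hCg xη' hxη' s hs
  have hgap : g xη' - g xη ≤ Cg * ‖xη' - xη‖ :=
    (sub_le_norm_mul_of_forall_add_inner_le hs xη).trans (by gcongr)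
  have hlin : (η + η') * μ / 2 * ‖xη' - xη‖ ≤ (η - η') * Cg := by
    obtain hzero | hpos := (norm_nonneg (xη' - xη)).eq_or_lt
    · rw [← hzero, mul_zero]
      exact mul_nonneg (sub_nonneg.2 hη'η) ((norm_nonneg s).trans hsCg)
    · refine le_of_mul_le_mul_right ?_ hpos
      nlinarith [mul_le_mul_of_nonneg_left hgap (sub_nonneg.2 hη'η)]
  rw [abs_of_nonneg (by rw [sub_nonneg, one_le_div hη']; exact hη'η),
    show Cg / μ * (η / η' - 1) = (η - η') * Cg / (η' * μ) by field_simp,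
    le_div_iff₀ (by positivity)]
  nlinarith [mul_nonneg (mul_nonneg (sub_nonneg.2 hη'η) hμ.le) (norm_nonneg (xη' - xη))]

theorem regularization_path_bound (n : ℕ)
    (X : Set (EuclideanSpace ℝ (Fin n)))
    (hXne : X.Nonempty) (hXcl : IsClosed X) (hXcv : Convex ℝ X)
    (f g : EuclideanSpace ℝ (Fin n) → ℝ)
    (hf : ConvexOn ℝ Set.univ f)
    (μ : ℝ) (hμ : 0 < μ)
    (hg : StrongConvexOn Set.univ μ g)
    (Cg : ℝ) (hCg : ∀ x ∈ X, ∀ s, SubgradientAt g x s → ‖s‖ ≤ Cg)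
    (η η' : ℝ) (hη' : 0 < η') (hη'η : η' ≤ η)
    (xη xη' : EuclideanSpace ℝ (Fin n))
    (hxη : xη ∈ X) (hxηmin : IsMinOn (fun y => f y + η * g y) X xη)
    (hxη' : xη' ∈ X) (hxη'min : IsMinOn (fun y => f y + η' * g y) X xη') :
    ‖xη' - xη‖ ≤ (Cg / μ) * |η / η' - 1| :=
  regularization_path_bound_general n X hXcv f g hf μ hμ hg Cg hCg η η' hη' hη'η xη xη' hxη hxηmin
    hxη' hxη'min
end

section
/- Under the hypotheses of the regularization path lemma, if additionally g is continuous and the set argmin_{x∈X} f has a minimizer x*_g of g over it (the bilevel solution), then as η_k → 0⁺ the regularized solutions x*_{η_k} converge to x*_g, the unique minimizer of g over argmin_{x∈X} f. -/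
/-!
Comparing `x*_η` with a minimizer `x` of `f` over `X` gives `f x*_η + η g x*_η ≤ f x + η g x`
and `f x ≤ f x*_η`, hence `g x*_η ≤ g x*_g`. Strongly convex functions have bounded sublevel
sets, so the path is bounded. The limit of a convergent subsequence minimizes `f` over `X` (pass
to the limit in the minimality of `x*_η`) and satisfies `g ≤ g x*_g`, so it is a minimizer of `g`
over `argmin_X f`; as `g` is strictly convex on this convex set, that minimizer is `x*_g`.
-/

open Filter Topology Set Bornology

theorem tendsto_of_isBounded_range_of_subseq_limit_eq {α : Type*} [PseudoMetricSpace α]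
    [ProperSpace α] {u : ℕ → α} {x : α} (hu : IsBounded (range u))
    (h : ∀ y (φ : ℕ → ℕ), StrictMono φ → Tendsto (u ∘ φ) atTop (𝓝 y) → y = x) :
    Tendsto u atTop (𝓝 x) :=
  hu.isCompact_closure.tendsto_nhds_of_unique_mapClusterPt
    (Eventually.of_forall fun k => subset_closure (mem_range_self k)) fun y _ hy =>
      let ⟨φ, hφ, hlim⟩ := hy.tendsto_subseq
      h y φ hφ hlim

theorem ConvexOn.convex_setOf_isMinOn {E : Type*} [AddCommGroup E] [Module ℝ E] {s : Set E}
    {f : E → ℝ} (hf : ConvexOn ℝ s f) : Convex ℝ {x | x ∈ s ∧ IsMinOn f s x} := by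
  intro x hx y hy a b ha hb hab
  refine ⟨hf.1 hx.1 hy.1 ha hb hab, fun z hz => ?_⟩
  calc f (a • x + b • y) ≤ a • f x + b • f y := hf.2 hx.1 hy.1 ha hb hab
    _ ≤ a • f z + b • f z := by gcongr; exacts [hx.2 hz, hy.2 hz]
    _ = f z := by rw [← add_smul, hab, one_smul]

theorem StrongConvexOn.isBounded_setOf_le {E : Type*} [NormedAddCommGroup E] [NormedSpace ℝ E]
    {g : E → ℝ} {μ : ℝ} {x₀ : E} (hg : StrongConvexOn univ μ g) (hμ : 0 < μ)
    (hgc : ContinuousAt g x₀) (c : ℝ) : IsBounded {x | g x ≤ c} := by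
  obtain ⟨δ, hδ, hball⟩ := Metric.nhds_basis_closedBall.eventually_iff.1
    (hgc.eventually (lt_mem_nhds (sub_one_lt (g x₀))))
  refine (Metric.isBounded_closedBall (x := x₀)
    (r := δ + 2 * (1 + |c - g x₀|) / (μ * δ))).subset fun x hx => ?_
  rw [Metric.mem_closedBall, dist_eq_norm]
  set d := ‖x - x₀‖
  rcases le_or_gt d δ with hd | hd
  · exact hd.trans (le_add_of_nonneg_right (by positivity))
  -- At the point of the segment `[x₀, x]` at distance `δ` from `x₀` we have `g > g x₀ - 1`,
  -- and strong convexity there gives `μ δ (d - δ) / 2 < 1 + |c - g x₀|`.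
  set t := δ / d
  have hd0 : 0 < d := hδ.trans hd
  have htd : t * d = δ := div_mul_cancel₀ δ hd0.ne'
  have ht1 : t ≤ 1 := (div_le_one hd0).2 hd.le
  have hy : t • x + (1 - t) • x₀ ∈ Metric.closedBall x₀ δ := by
    rw [Metric.mem_closedBall, dist_eq_norm,
      show t • x + (1 - t) • x₀ - x₀ = t • (x - x₀) by module, norm_smul,
      Real.norm_of_nonneg (by positivity), htd]
  have hconv := hg.2 (mem_univ x) (mem_univ x₀) (by positivity) (sub_nonneg.2 ht1)
    (add_sub_cancel t 1)
  have hlow := hball hy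
  simp only [smul_eq_mul] at hconv
  have hsq : t * (1 - t) * (μ / 2 * d ^ 2) = μ / 2 * (δ * (d - δ)) := by
    rw [← htd]; ring
  have hgx : t * g x ≤ t * c := mul_le_mul_of_nonneg_left hx (by positivity)
  have hgap : t * (c - g x₀) ≤ |c - g x₀| :=
    calc t * (c - g x₀) ≤ t * |c - g x₀| := by gcongr; exact le_abs_self _
      _ ≤ |c - g x₀| := mul_le_of_le_one_left (abs_nonneg _) ht1
  rw [← sub_le_iff_le_add', le_div_iff₀ (by positivity)]
  linarith

theorem le_of_isMinOn_add_mul {E : Type*} {X : Set E} {f g : E → ℝ} {η : ℝ} {x x₀ : E}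
    (hη : 0 < η) (hx : x ∈ X) (hxmin : IsMinOn (fun z => f z + η * g z) X x) (hx₀ : x₀ ∈ X)
    (hx₀min : IsMinOn f X x₀) : g x ≤ g x₀ := by
  have hreg : f x + η * g x ≤ f x₀ + η * g x₀ := hxmin hx₀
  have hf : f x₀ ≤ f x := hx₀min hx
  exact le_of_mul_le_mul_left (by linarith) hη

theorem isMinOn_of_tendsto_of_isMinOn_add_mul {E ι : Type*} [TopologicalSpace E] {l : Filter ι}
    [l.NeBot] {X : Set E} {f g : E → ℝ} {η : ι → ℝ} {x : ι → E} {y : E}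
    (hfc : ContinuousAt f y) (hgc : ContinuousAt g y) (hη : Tendsto η l (𝓝 0))
    (hxmin : ∀ k, IsMinOn (fun z => f z + η k * g z) X (x k)) (hxy : Tendsto x l (𝓝 y)) :
    IsMinOn f X y := by
  intro z hz
  have hlim : Tendsto (fun k => f (x k) + η k * g (x k)) l (𝓝 (f y + 0 * g y)) :=
    (hfc.tendsto.comp hxy).add (hη.mul (hgc.tendsto.comp hxy))
  have hlimz : Tendsto (fun k => f z + η k * g z) l (𝓝 (f z + 0 * g z)) :=
    tendsto_const_nhds.add (hη.mul tendsto_const_nhds)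
  simpa using le_of_tendsto_of_tendsto' hlim hlimz fun k => hxmin k hz

theorem tikhonov_limit_general (n : ℕ)
    (X : Set (EuclideanSpace ℝ (Fin n)))
    (hXcl : IsClosed X) (hXcv : Convex ℝ X)
    (f g : EuclideanSpace ℝ (Fin n) → ℝ)
    (hf : ConvexOn ℝ Set.univ f)
    (μ : ℝ) (hμ : 0 < μ)
    (hg : StrongConvexOn Set.univ μ g)
    (hgc : Continuous g)
    (xg : EuclideanSpace ℝ (Fin n))
    (hxg : xg ∈ {x | x ∈ X ∧ IsMinOn f X x})
    (hxgmin : IsMinOn g {x | x ∈ X ∧ IsMinOn f X x} xg)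
    (η : ℕ → ℝ) (hη : ∀ k, 0 < η k) (hη0 : Tendsto η atTop (nhds 0))
    (xη : ℕ → EuclideanSpace ℝ (Fin n))
    (hxη : ∀ k, xη k ∈ X)
    (hxηmin : ∀ k, IsMinOn (fun y => f y + η k * g y) X (xη k)) :
    Tendsto xη atTop (nhds xg) := by
  have hgle : ∀ k, g (xη k) ≤ g xg := fun k =>
    le_of_isMinOn_add_mul (hη k) (hxη k) (hxηmin k) hxg.1 hxg.2
  have hbdd : IsBounded (range xη) :=
    (hg.isBounded_setOf_le hμ (hgc.continuousAt (x := xg)) (g xg)).subset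
      (range_subset_iff.2 hgle)
  have hfc : Continuous f := continuousOn_univ.1 (hf.continuousOn isOpen_univ)
  have hgS : StrictConvexOn ℝ {x | x ∈ X ∧ IsMinOn f X x} g :=
    (hg.strictConvexOn hμ).subset (subset_univ _)
      (hf.subset (subset_univ X) hXcv).convex_setOf_isMinOn
  refine tendsto_of_isBounded_range_of_subseq_limit_eq hbdd fun y φ hφ hlim => ?_
  have hyX : y ∈ X := hXcl.mem_of_tendsto hlim (Eventually.of_forall fun k => hxη _)
  have hymin : IsMinOn f X y := isMinOn_of_tendsto_of_isMinOn_add_mul hfc.continuousAt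
    hgc.continuousAt (hη0.comp hφ.tendsto_atTop) (fun k => hxηmin (φ k)) hlim
  have hgy : g y ≤ g xg :=
    le_of_tendsto ((hgc.tendsto y).comp hlim) (Eventually.of_forall fun k => hgle (φ k))
  exact hgS.eq_of_isMinOn (fun z hz => hgy.trans (hxgmin hz)) hxgmin ⟨hyX, hymin⟩ hxg

theorem tikhonov_limit (n : ℕ)
    (X : Set (EuclideanSpace ℝ (Fin n)))
    (hXne : X.Nonempty) (hXcl : IsClosed X) (hXcv : Convex ℝ X)
    (f g : EuclideanSpace ℝ (Fin n) → ℝ)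
    (hf : ConvexOn ℝ Set.univ f)
    (μ : ℝ) (hμ : 0 < μ)
    (hg : StrongConvexOn Set.univ μ g)
    (hgc : Continuous g)
    (xg : EuclideanSpace ℝ (Fin n))
    (hxg : xg ∈ {x | x ∈ X ∧ IsMinOn f X x})
    (hxgmin : IsMinOn g {x | x ∈ X ∧ IsMinOn f X x} xg)
    (η : ℕ → ℝ) (hη : ∀ k, 0 < η k) (hη0 : Tendsto η atTop (nhds 0))
    (xη : ℕ → EuclideanSpace ℝ (Fin n))
    (hxη : ∀ k, xη k ∈ X)
    (hxηmin : ∀ k, IsMinOn (fun y => f y + η k * g y) X (xη k)) :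
    Tendsto xη atTop (nhds xg) :=
  tikhonov_limit_general n X hXcl hXcv f g hf μ hμ hg hgc xg hxg hxgmin η hη hη0 xη hxη hxηmin
end
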